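/- Bound on Q_{1T}: Under the setup assumptions, define Q_{1T}(t_s, t_e) := ∑_{1≤i<j≤l} L_{f_j}f_i(t_s, x(t_s)) V_i(t_s, t_e) V_j(t_s, t_e) + (1/2) ∑_{i=1}^l L_{f_i}f_i(t_s, x(t_s)) V_i(t_s, t_e)², where V_i(t_s, t_e) := ∫_{t_s}^{t_e} ω₁^{p_i} u_i(ω₁θ) dθ. Then ‖Q_{1T}(t_s, t_e)‖ ≤ 2π² l² L Λ₁ ‖x₀‖ ω₁^{p′−1}. -/

import Mathlib

open MeasureTheory Real Filter

noncomputable section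

/-- The state space `ℝ^n`. -/
abbrev E (n : ℕ) := EuclideanSpace ℝ (Fin n)

/-- Lie derivative `L_{f_a} f_b (t,x) = D_x f_b(t,x) [f_a(t,x)]`. -/
def lieDeriv {n : ℕ} (f : ℕ → ℝ → E n → E n)
    (Df : ℕ → ℝ → E n → (E n →L[ℝ] E n)) (a b : ℕ) (t : ℝ) (x : E n) : E n :=
  Df b t x (f a t x)

/-- Second Lie derivative `L_{f_m} L_{f_j} f_i (t,x) = D_x (L_{f_j} f_i)(t,x) [f_m(t,x)]`. -/
def lieDeriv2 {n : ℕ} (f : ℕ → ℝ → E n → E n)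
    (Df : ℕ → ℝ → E n → (E n →L[ℝ] E n))
    (DLf : ℕ → ℕ → ℝ → E n → (E n →L[ℝ] E n)) (m j i : ℕ) (t : ℝ) (x : E n) : E n :=
  DLf j i t x (f m t x)

/-- Lie bracket `[f_i, f_j] = L_{f_i} f_j − L_{f_j} f_i`. -/
def lieBracket {n : ℕ} (f : ℕ → ℝ → E n → E n)
    (Df : ℕ → ℝ → E n → (E n →L[ℝ] E n)) (i j : ℕ) (t : ℝ) (x : E n) : E n :=
  lieDeriv f Df i j t x - lieDeriv f Df j i t x

/-- `γ_{ij}(ω) = (ω^{p_i+p_j}/T) ∫₀^T ∫₀^θ u_j(ωθ) u_i(ωτ) dτ dθ`, `T = 2π/ω`. -/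
def gammaCoeff (p : ℕ → ℝ) (u : ℕ → ℝ → ℝ) (i j : ℕ) (ω : ℝ) : ℝ :=
  ω ^ (p i + p j) / (2 * π / ω) *
    ∫ θ in (0:ℝ)..(2 * π / ω), ∫ τ in (0:ℝ)..θ, u j (ω * θ) * u i (ω * τ)

/-- Regularity of a time-dependent vector field: continuous in the first argument,
globally uniformly `L`-Lipschitz in the second argument, and vanishing at `x = 0`. -/
def RegVF {n : ℕ} (L : ℝ) (g : ℝ → E n → E n) : Prop :=
  (∀ x, Continuous fun t => g t x) ∧
  (∀ t x y, ‖g t x - g t y‖ ≤ L * ‖x - y‖) ∧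
  (∀ t, g t 0 = 0)

/-- Standing assumptions: dither assumptions and vector-field assumptions. -/
structure Hyps {n : ℕ} (l : ℕ)
    (f : ℕ → ℝ → E n → E n)
    (Df : ℕ → ℝ → E n → (E n →L[ℝ] E n))
    (ft : ℕ → ℝ → E n → E n)
    (Lft : ℕ → ℕ → ℝ → E n → E n)
    (DLf : ℕ → ℕ → ℝ → E n → (E n →L[ℝ] E n))
    (u : ℕ → ℝ → ℝ) (p : ℕ → ℝ) (L : ℝ) : Prop where
  hp0 : p 0 = 0
  hu0 : ∀ t, u 0 t = 1
  hp : ∀ i, 1 ≤ i → i ≤ l → p i ∈ Set.Ioo (0:ℝ) 1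
  humeas : ∀ i, i ≤ l → Measurable (u i)
  hubdd : ∀ i, i ≤ l → ∀ t, |u i t| ≤ 1
  huper : ∀ i, i ≤ l → ∀ t, u i (t + 2 * π) = u i t
  huzm : ∀ i, 1 ≤ i → i ≤ l → (∫ t in (0:ℝ)..(2 * π), u i t) = 0
  hLpos : 0 < L
  hDf : ∀ i, i ≤ l → ∀ t x, HasFDerivAt (f i t) (Df i t x) x
  hft : ∀ i, i ≤ l → ∀ x t, HasDerivAt (fun s => f i s x) (ft i t x) t
  hLft : ∀ i j, i ≤ l → j ≤ l → ∀ x t,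
    HasDerivAt (fun s => lieDeriv f Df j i s x) (Lft j i t x) t
  hDLf : ∀ i j, i ≤ l → j ≤ l → ∀ t x,
    HasFDerivAt (fun y => lieDeriv f Df j i t y) (DLf j i t x) x
  hreg_f : ∀ i, i ≤ l → RegVF L (f i)
  hreg_ft : ∀ i, i ≤ l → RegVF L (ft i)
  hreg_Lf : ∀ i j, i ≤ l → j ≤ l → RegVF L (lieDeriv f Df j i)
  hreg_Lft : ∀ i j, i ≤ l → j ≤ l → RegVF L (Lft j i)
  hreg_LLf : ∀ i j m, i ≤ l → j ≤ l → m ≤ l → RegVF L (lieDeriv2 f Df DLf m j i)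

/-- The interaction condition on the powers `p_i` and the Lie brackets. -/
def InteractionCondition {n : ℕ} (l : ℕ) (f : ℕ → ℝ → E n → E n)
    (Df : ℕ → ℝ → E n → (E n →L[ℝ] E n)) (u : ℕ → ℝ → ℝ) (p : ℕ → ℝ) : Prop :=
  ∀ i j, 1 ≤ i → i ≤ l → 1 ≤ j → j ≤ l → 1 < p i + p j →
    (∀ ω : ℝ, 0 < ω → gammaCoeff p u i j ω = 0) ∨
    (∀ (t : ℝ) (x : E n), lieBracket f Df i j t x = 0)

/-- `x` is a (Carathéodory, i.e. integral-form) solution of the input-affine system (S)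
with dither frequency `ω` on the set `s`, with initial time `t₀`. -/
def IsSSol {n : ℕ} (l : ℕ) (f : ℕ → ℝ → E n → E n) (u : ℕ → ℝ → ℝ) (p : ℕ → ℝ)
    (ω : ℝ) (x : ℝ → E n) (s : Set ℝ) (t₀ : ℝ) : Prop :=
  ContinuousOn x s ∧
  ∀ t ∈ s, x t = x t₀ + ∫ τ in t₀..t,
    (f 0 τ (x τ) + ∑ i ∈ Finset.Icc 1 l, (ω ^ p i * u i (ω * τ)) • f i τ (x τ))

/-- `x` is a solution of the associated Lie-bracket system (LBS), with coefficients
`ν i j = lim_{ω → ∞} γ_{ij}(ω)`, on the set `s`, with initial time `t₀`. -/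
def IsLBSSol {n : ℕ} (l : ℕ) (f : ℕ → ℝ → E n → E n)
    (Df : ℕ → ℝ → E n → (E n →L[ℝ] E n)) (ν : ℕ → ℕ → ℝ)
    (x : ℝ → E n) (s : Set ℝ) (t₀ : ℝ) : Prop :=
  ContinuousOn x s ∧
  ∀ t ∈ s, x t = x t₀ + ∫ τ in t₀..t,
    (f 0 τ (x τ) + ∑ i ∈ Finset.Icc 1 l, ∑ j ∈ Finset.Ioc i l,
      ν i j • lieBracket f Df i j τ (x τ))

end
noncomputable section

/-- `V_i(t_s, t_e) = ∫_{t_s}^{t_e} ω₁^{p_i} u_i(ω₁ θ) dθ`. -/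
def Vi (u : ℕ → ℝ → ℝ) (p : ℕ → ℝ) (ω₁ : ℝ) (i : ℕ) (ts te : ℝ) : ℝ :=
  ∫ θ in ts..te, ω₁ ^ p i * u i (ω₁ * θ)

/-- `V_{ij}(t_s, t_e) = ∫_{t_s}^{t_e} ω₁^{p_i} u_i(ω₁ θ) V_j(t_s, θ) dθ`. -/
def Vij (u : ℕ → ℝ → ℝ) (p : ℕ → ℝ) (ω₁ : ℝ) (i j : ℕ) (ts te : ℝ) : ℝ :=
  ∫ θ in ts..te, (ω₁ ^ p i * u i (ω₁ * θ)) * Vi u p ω₁ j ts θ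

/-- The remainder `R(t_s, t_e)`. -/
def Rrem {n : ℕ} (l : ℕ) (f : ℕ → ℝ → E n → E n)
    (Df : ℕ → ℝ → E n → (E n →L[ℝ] E n))
    (DLf : ℕ → ℕ → ℝ → E n → (E n →L[ℝ] E n))
    (u : ℕ → ℝ → ℝ) (p : ℕ → ℝ) (ω₁ : ℝ) (x : ℝ → E n) (ts te : ℝ) : E n :=
  ∑ i ∈ Finset.Icc 1 l, ∑ j ∈ Finset.Icc 0 l, ∑ m ∈ Finset.Icc 0 l,
    ω₁ ^ (p i + p j + p m) •
      ∫ θ in ts..te, u i (ω₁ * θ) •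
        ∫ τ in ts..θ, u j (ω₁ * τ) •
          ∫ σ in ts..τ, u m (ω₁ * σ) • lieDeriv2 f Df DLf m j i σ (x σ)

/-- The term `Q_{V1}(t_s, t_e)`. -/
def QV1 {n : ℕ} (l : ℕ) (ft : ℕ → ℝ → E n → E n)
    (u : ℕ → ℝ → ℝ) (p : ℕ → ℝ) (ω₁ : ℝ) (x : ℝ → E n) (ts te : ℝ) : E n :=
  ∑ i ∈ Finset.Icc 1 l, ω₁ ^ p i •
    ∫ θ in ts..te, u i (ω₁ * θ) • ∫ τ in ts..θ, ft i τ (x τ)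

/-- The term `Q_{V2}(t_s, t_e)`. -/
def QV2 {n : ℕ} (l : ℕ) (Lft : ℕ → ℕ → ℝ → E n → E n)
    (u : ℕ → ℝ → ℝ) (p : ℕ → ℝ) (ω₁ : ℝ) (x : ℝ → E n) (ts te : ℝ) : E n :=
  ∑ i ∈ Finset.Ico 1 l, ∑ j ∈ Finset.Icc 0 l,
    ω₁ ^ (p i + p j) •
      ∫ θ in ts..te, u i (ω₁ * θ) •
        ∫ τ in ts..θ, u j (ω₁ * τ) • ∫ σ in ts..τ, Lft j i σ (x σ)

/-- The term `Q_1(t_s, t_e)`. -/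
def Q1 {n : ℕ} (l : ℕ) (f : ℕ → ℝ → E n → E n)
    (Df : ℕ → ℝ → E n → (E n →L[ℝ] E n))
    (u : ℕ → ℝ → ℝ) (p : ℕ → ℝ) (ω₁ : ℝ) (x : ℝ → E n) (ts te : ℝ) : E n :=
  ∑ i ∈ Finset.Icc 1 l, Vij u p ω₁ i 0 ts te • lieDeriv f Df 0 i ts (x ts)

/-- The term `Q_{1T}(t_s, t_e)`. -/
def Q1T {n : ℕ} (l : ℕ) (f : ℕ → ℝ → E n → E n)
    (Df : ℕ → ℝ → E n → (E n →L[ℝ] E n))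
    (u : ℕ → ℝ → ℝ) (p : ℕ → ℝ) (ω₁ : ℝ) (x : ℝ → E n) (ts te : ℝ) : E n :=
  (∑ i ∈ Finset.Icc 1 l, ∑ j ∈ Finset.Ioc i l,
    (Vi u p ω₁ i ts te * Vi u p ω₁ j ts te) • lieDeriv f Df j i ts (x ts))
  + (1/2 : ℝ) • ∑ i ∈ Finset.Icc 1 l,
      ((Vi u p ω₁ i ts te) ^ 2) • lieDeriv f Df i i ts (x ts)

/-- The term `H(t_s, t_e)`. -/
def Hterm {n : ℕ} (l : ℕ) (f : ℕ → ℝ → E n → E n)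
    (Df : ℕ → ℝ → E n → (E n →L[ℝ] E n))
    (u : ℕ → ℝ → ℝ) (p : ℕ → ℝ) (ω₁ : ℝ) (x : ℝ → E n) (ts te : ℝ) : E n :=
  (∑ i ∈ Finset.Icc 1 l, Vi u p ω₁ i ts te • f i ts (x ts))
  + ∑ i ∈ Finset.Icc 1 l, ∑ j ∈ Finset.Ioc i l,
      Vij u p ω₁ j i ts te • lieBracket f Df i j ts (x ts)

/-- The term `I(t_s, t_e)`. -/
def Iterm {n : ℕ} (l : ℕ) (f : ℕ → ℝ → E n → E n)
    (Df : ℕ → ℝ → E n → (E n →L[ℝ] E n))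
    (u : ℕ → ℝ → ℝ) (p : ℕ → ℝ) (ω₁ : ℝ) (x : ℝ → E n) (ts te : ℝ) : E n :=
  ∫ θ in ts..te, ∑ i ∈ Finset.Icc 1 l, ∑ j ∈ Finset.Ioc i l,
    gammaCoeff p u i j ω₁ • lieBracket f Df i j θ (x θ)

/-- The term `R_{L1}(t_s, t_e)`. -/
def RL1 {n : ℕ} (l : ℕ) (f : ℕ → ℝ → E n → E n)
    (Df : ℕ → ℝ → E n → (E n →L[ℝ] E n))
    (u : ℕ → ℝ → ℝ) (p : ℕ → ℝ) (ω₁ : ℝ) (x : ℝ → E n) (ts te : ℝ) : E n :=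
  ∑ i ∈ Finset.Icc 1 l, ∑ j ∈ Finset.Ioc i l,
    gammaCoeff p u i j ω₁ •
      ∫ θ in ts..te, (lieBracket f Df i j ts (x ts) - lieBracket f Df i j θ (x θ))

/-- The remainder `R_{T1}(t₀, t₁)`. -/
def RT1 {n : ℕ} (l : ℕ) (f : ℕ → ℝ → E n → E n)
    (Df : ℕ → ℝ → E n → (E n →L[ℝ] E n))
    (ft : ℕ → ℝ → E n → E n) (Lft : ℕ → ℕ → ℝ → E n → E n)
    (u : ℕ → ℝ → ℝ) (p : ℕ → ℝ) (ω₁ : ℝ) (x : ℝ → E n) (t₀ t₁ : ℝ) : E n :=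
  let T₁ : ℝ := 2 * π / ω₁
  let r : ℕ := ⌊(t₁ - t₀) / T₁⌋₊
  let tq : ℕ → ℝ := fun q => t₀ + (q : ℝ) * T₁
  (∑ q ∈ Finset.range r,
      (QV1 l ft u p ω₁ x (tq q) (tq (q+1)) + QV2 l Lft u p ω₁ x (tq q) (tq (q+1))
        + Q1 l f Df u p ω₁ x (tq q) (tq (q+1)) + RL1 l f Df u p ω₁ x (tq q) (tq (q+1))))
    - Iterm l f Df u p ω₁ x (tq r) t₁
    + QV1 l ft u p ω₁ x (tq r) t₁ + QV2 l Lft u p ω₁ x (tq r) t₁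
    + Q1 l f Df u p ω₁ x (tq r) t₁ + Q1T l f Df u p ω₁ x (tq r) t₁
    + Hterm l f Df u p ω₁ x (tq r) t₁

end

/-! Since `|u_i| ≤ 1` and `t_e - t_s ≤ 2π/ω₁`, each `|V_i| ≤ 2π ω₁^(p_i - 1)`; as `p_i < 1 ≤ ω₁`,
every product `V_i V_j` is at most `4π² ω₁^(p' - 1)`. The Lie derivatives vanish at `0` and are
`L`-Lipschitz, hence bounded by `L ‖x(t_s)‖ ≤ L Λ₁ ‖x₀‖`. Finally `Q_{1T}` has `l(l-1)/2`
off-diagonal terms and `l` diagonal terms weighted by `1/2`, that is `l²/2` terms in all. -/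

open Finset

lemma sum_card_Ioc_mul_two_add (l : ℕ) :
    (∑ i ∈ Icc 1 l, #(Ioc i l)) * 2 + l = l ^ 2 := by
  induction l with
  | zero => simp
  | succ l ih =>
    have hsucc : ∀ i ∈ Icc 1 l, #(Ioc i (l + 1)) = #(Ioc i l) + 1 := by
      intro i hi
      simp only [Nat.card_Ioc]
      have := (mem_Icc.mp hi).2
      omega
    rw [sum_Icc_succ_top (by omega), sum_congr rfl hsucc, sum_add_distrib]
    simp only [Ioc_self, card_empty, sum_const, Nat.card_Icc, smul_eq_mul, Nat.add_sub_cancel,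
      mul_one, add_zero]
    nlinarith [ih]

lemma norm_sum_Ioc_add_half_sum_diag_le {F : Type*} [SeminormedAddCommGroup F]
    [NormedSpace ℝ F] (l : ℕ) (a : ℕ → ℕ → F) (B : ℝ)
    (ha : ∀ i j, 1 ≤ i → i ≤ j → j ≤ l → ‖a i j‖ ≤ B) :
    ‖(∑ i ∈ Icc 1 l, ∑ j ∈ Ioc i l, a i j) + (1 / 2 : ℝ) • ∑ i ∈ Icc 1 l, a i i‖
      ≤ l ^ 2 / 2 * B := by
  have hoff : ‖∑ i ∈ Icc 1 l, ∑ j ∈ Ioc i l, a i j‖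
      ≤ (∑ i ∈ Icc 1 l, (#(Ioc i l) : ℝ)) * B := by
    rw [sum_mul]
    refine norm_sum_le_of_le _ fun i hi => ?_
    rw [← nsmul_eq_mul, ← sum_const]
    refine norm_sum_le_of_le _ fun j hj => ?_
    have := mem_Icc.mp hi; have := mem_Ioc.mp hj
    exact ha i j (by omega) (by omega) (by omega)
  have hdiag : ‖∑ i ∈ Icc 1 l, a i i‖ ≤ l * B := by
    simpa using norm_sum_le_of_le (Icc 1 l) fun i hi =>
      ha i i (mem_Icc.mp hi).1 le_rfl (mem_Icc.mp hi).2
  have hcount : (∑ i ∈ Icc 1 l, (#(Ioc i l) : ℝ)) * 2 + l = (l : ℝ) ^ 2 := by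
    exact_mod_cast sum_card_Ioc_mul_two_add l
  calc _ ≤ ‖∑ i ∈ Icc 1 l, ∑ j ∈ Ioc i l, a i j‖ + 1 / 2 * ‖∑ i ∈ Icc 1 l, a i i‖ := by
        refine (norm_add_le _ _).trans_eq ?_
        rw [norm_smul, Real.norm_eq_abs, abs_of_pos one_half_pos]
    _ ≤ (∑ i ∈ Icc 1 l, (#(Ioc i l) : ℝ)) * B + 1 / 2 * (l * B) := by gcongr
    _ = l ^ 2 / 2 * B := by rw [← hcount]; ring

lemma RegVF.norm_le {n : ℕ} {L : ℝ} {g : ℝ → E n → E n} (hg : RegVF L g) (t : ℝ) (x : E n) :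
    ‖g t x‖ ≤ L * ‖x‖ := by
  simpa [hg.2.2 t] using hg.2.1 t x 0

lemma abs_Vi_le {u : ℕ → ℝ → ℝ} {p : ℕ → ℝ} {ω : ℝ} {i : ℕ} {ts te : ℝ}
    (hu : ∀ t, |u i t| ≤ 1) (hω : 0 < ω) (hte : te ∈ Set.Icc ts (ts + 2 * π / ω)) :
    |Vi u p ω i ts te| ≤ 2 * π * ω ^ (p i - 1) := by
  have hint : ‖Vi u p ω i ts te‖ ≤ ω ^ p i * |te - ts| := by
    refine intervalIntegral.norm_integral_le_of_norm_le_const fun θ _ => ?_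
    rw [Real.norm_eq_abs, abs_mul, abs_of_nonneg (by positivity)]
    exact mul_le_of_le_one_right (by positivity) (hu _)
  calc |Vi u p ω i ts te| ≤ ω ^ p i * |te - ts| := hint
    _ ≤ ω ^ p i * (2 * π / ω) := by
        rw [abs_of_nonneg (by linarith [hte.1])]
        gcongr
        linarith [hte.2]
    _ = 2 * π * ω ^ (p i - 1) := by rw [Real.rpow_sub_one hω.ne']; ring

lemma abs_Vi_mul_Vi_le {u : ℕ → ℝ → ℝ} {p : ℕ → ℝ} {ω p' : ℝ} {i j : ℕ} {ts te : ℝ}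
    (hui : ∀ t, |u i t| ≤ 1) (huj : ∀ t, |u j t| ≤ 1) (hω : 1 ≤ ω)
    (hpi : p i ≤ 1) (hpj : p j ≤ p') (hte : te ∈ Set.Icc ts (ts + 2 * π / ω)) :
    |Vi u p ω i ts te * Vi u p ω j ts te| ≤ 4 * π ^ 2 * ω ^ (p' - 1) := by
  have hω₀ : 0 < ω := one_pos.trans_le hω
  have hi : |Vi u p ω i ts te| ≤ 2 * π :=
    (abs_Vi_le hui hω₀ hte).trans <| mul_le_of_le_one_right (by positivity) <|
      Real.rpow_le_one_of_one_le_of_nonpos hω (by linarith)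
  have hj : |Vi u p ω j ts te| ≤ 2 * π * ω ^ (p' - 1) :=
    (abs_Vi_le huj hω₀ hte).trans (by gcongr)
  calc |Vi u p ω i ts te * Vi u p ω j ts te| ≤ 2 * π * (2 * π * ω ^ (p' - 1)) := by
        rw [abs_mul]; gcongr
    _ = 4 * π ^ 2 * ω ^ (p' - 1) := by ring

theorem bound_Q1T_general
    {n : ℕ} (l : ℕ)
    (f : ℕ → ℝ → E n → E n)
    (Df : ℕ → ℝ → E n → (E n →L[ℝ] E n))
    (ft : ℕ → ℝ → E n → E n)
    (Lft : ℕ → ℕ → ℝ → E n → E n)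
    (DLf : ℕ → ℕ → ℝ → E n → (E n →L[ℝ] E n))
    (u : ℕ → ℝ → ℝ) (p : ℕ → ℝ) (L : ℝ)
    (hyp : Hyps l f Df ft Lft DLf u p L)
    -- setup: a bounded solution of (S) with frequency `ω₁ ≥ 1` on `[t₀, t₁]`
    (t₀ t₁ ω₁ Λ₁ : ℝ) (x₀ : E n) (x : ℝ → E n)
    (hω₁ : 1 ≤ ω₁)
    (hxb : ∀ t ∈ Set.Icc t₀ t₁, ‖x t‖ ≤ Λ₁ * ‖x₀‖)
    -- `p′ = max_{1 ≤ i ≤ l} p i`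
    (p' : ℝ)
    (hp'ub : ∀ i, 1 ≤ i → i ≤ l → p i ≤ p')
    -- `t_s ∈ [t₀, t_r]` and `t_e ∈ [t_s, min (t_s + T₁) t₁]`, where `T₁ = 2π/ω₁`
    (ts te : ℝ)
    (hts : ts ∈ Set.Icc t₀ (t₀ + (⌊(t₁ - t₀) / (2 * π / ω₁)⌋₊ : ℝ) * (2 * π / ω₁)))
    (hte : te ∈ Set.Icc ts (min (ts + 2 * π / ω₁) t₁)) :
    ‖Q1T l f Df u p ω₁ x ts te‖
      ≤ 2 * π ^ 2 * l ^ 2 * L * Λ₁ * ‖x₀‖ * ω₁ ^ (p' - 1) := by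
  have hte' : te ∈ Set.Icc ts (ts + 2 * π / ω₁) := ⟨hte.1, hte.2.trans (min_le_left _ _)⟩
  have hxts : ‖x ts‖ ≤ Λ₁ * ‖x₀‖ :=
    hxb ts ⟨hts.1, hte.1.trans (hte.2.trans (min_le_right _ _))⟩
  have hterm : ∀ i j, 1 ≤ i → i ≤ j → j ≤ l →
      ‖(Vi u p ω₁ i ts te * Vi u p ω₁ j ts te) • lieDeriv f Df j i ts (x ts)‖
        ≤ 4 * π ^ 2 * ω₁ ^ (p' - 1) * (L * (Λ₁ * ‖x₀‖)) := by
    intro i j hi hij hj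
    rw [norm_smul, Real.norm_eq_abs]
    gcongr
    · exact abs_Vi_mul_Vi_le (hyp.hubdd i (by omega)) (hyp.hubdd j hj) hω₁
        (hyp.hp i hi (by omega)).2.le (hp'ub j (by omega) hj) hte'
    · exact ((hyp.hreg_Lf i j (by omega) hj).norm_le ts (x ts)).trans
        (mul_le_mul_of_nonneg_left hxts hyp.hLpos.le)
  calc ‖Q1T l f Df u p ω₁ x ts te‖
        ≤ l ^ 2 / 2 * (4 * π ^ 2 * ω₁ ^ (p' - 1) * (L * (Λ₁ * ‖x₀‖))) := by
        simp only [Q1T, pow_two (Vi _ _ _ _ _ _)]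
        exact norm_sum_Ioc_add_half_sum_diag_le l _ _ hterm
    _ = 2 * π ^ 2 * l ^ 2 * L * Λ₁ * ‖x₀‖ * ω₁ ^ (p' - 1) := by ring

/-- **Bound on `Q_{1T}`** (Lemma 9). -/
theorem bound_Q1T
    {n : ℕ} (l : ℕ)
    (f : ℕ → ℝ → E n → E n)
    (Df : ℕ → ℝ → E n → (E n →L[ℝ] E n))
    (ft : ℕ → ℝ → E n → E n)
    (Lft : ℕ → ℕ → ℝ → E n → E n)
    (DLf : ℕ → ℕ → ℝ → E n → (E n →L[ℝ] E n))
    (u : ℕ → ℝ → ℝ) (p : ℕ → ℝ) (L : ℝ)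
    (hyp : Hyps l f Df ft Lft DLf u p L)
    -- setup: a bounded solution of (S) with frequency `ω₁ ≥ 1` on `[t₀, t₁]`
    (t₀ t₁ ω₁ Λ₁ : ℝ) (x₀ : E n) (x : ℝ → E n)
    (h01 : t₀ < t₁) (hω₁ : 1 ≤ ω₁) (hΛ₁ : 1 ≤ Λ₁)
    (hx0 : x t₀ = x₀)
    (hsol : IsSSol l f u p ω₁ x (Set.Icc t₀ t₁) t₀)
    (hxb : ∀ t ∈ Set.Icc t₀ t₁, ‖x t‖ ≤ Λ₁ * ‖x₀‖)
    -- `p′ = max_{1 ≤ i ≤ l} p i`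
    (p' : ℝ)
    (hp'ub : ∀ i, 1 ≤ i → i ≤ l → p i ≤ p')
    (hp'mem : ∃ i, 1 ≤ i ∧ i ≤ l ∧ p i = p')
    -- `t_s ∈ [t₀, t_r]` and `t_e ∈ [t_s, min (t_s + T₁) t₁]`, where `T₁ = 2π/ω₁`
    (ts te : ℝ)
    (hts : ts ∈ Set.Icc t₀ (t₀ + (⌊(t₁ - t₀) / (2 * π / ω₁)⌋₊ : ℝ) * (2 * π / ω₁)))
    (hte : te ∈ Set.Icc ts (min (ts + 2 * π / ω₁) t₁)) :
    ‖Q1T l f Df u p ω₁ x ts te‖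
      ≤ 2 * π ^ 2 * l ^ 2 * L * Λ₁ * ‖x₀‖ * ω₁ ^ (p' - 1) :=
  bound_Q1T_general l f Df ft Lft DLf u p L hyp t₀ t₁ ω₁ Λ₁ x₀ x hω₁ hxb p' hp'ub ts te hts hte
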